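/- The equation θ² + 2θ sin θ + 6(cos θ - 1) = 0 has a unique root θ₀ in the interval [π, 2π]. -/

import Mathlib

open Real

/-
The left-hand side has derivative 2θ(1 + cos θ) - 4 sin θ, which is positive on (π, 2π) since
there sin θ < 0 and cos θ ≥ -1. So it is strictly increasing on [π, 2π], where it goes from
π² - 12 < 0 to 4π² > 0; the intermediate value theorem gives the root, monotonicity its uniqueness.
-/

open Set in
theorem StrictMonoOn.existsUnique_eq_of_mem_Icc {α δ : Type*} [ConditionallyCompleteLinearOrder α]
    [TopologicalSpace α] [OrderTopology α] [DenselyOrdered α] [LinearOrder δ] [TopologicalSpace δ]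
    [OrderClosedTopology δ] {f : α → δ} {a b : α} {y : δ} (hab : a ≤ b)
    (hmono : StrictMonoOn f (Icc a b)) (hcont : ContinuousOn f (Icc a b)) (hy : y ∈ Icc (f a) (f b)) :
    ∃! x, x ∈ Icc a b ∧ f x = y := by
  obtain ⟨x, hx, rfl⟩ := intermediate_value_Icc hab hcont hy
  exact ⟨x, ⟨hx, rfl⟩, fun x' ⟨hx', hfx'⟩ => hmono.injOn hx' hx hfx'⟩

noncomputable def eqnLhs (θ : ℝ) : ℝ := θ ^ 2 + 2 * θ * sin θ + 6 * (cos θ - 1)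

theorem hasDerivAt_eqnLhs (x : ℝ) :
    HasDerivAt eqnLhs (2 * x * (1 + cos x) - 4 * sin x) x := by
  have h := ((hasDerivAt_pow 2 x).fun_add (((hasDerivAt_id' x).const_mul 2).fun_mul
    (hasDerivAt_sin x))).fun_add (((hasDerivAt_cos x).sub_const 1).const_mul 6)
  exact h.congr_deriv (by push_cast; ring)

theorem continuous_eqnLhs : Continuous eqnLhs :=
  continuous_iff_continuousAt.mpr fun x => (hasDerivAt_eqnLhs x).continuousAt

theorem strictMonoOn_eqnLhs : StrictMonoOn eqnLhs (Set.Icc π (2 * π)) := by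
  refine strictMonoOn_of_deriv_pos (convex_Icc _ _) continuous_eqnLhs.continuousOn fun x hx => ?_
  rw [interior_Icc] at hx
  rw [(hasDerivAt_eqnLhs x).deriv]
  have hsin : sin x < 0 := by
    rw [← sin_sub_two_pi]
    exact sin_neg_of_neg_of_neg_pi_lt (by linarith [hx.2]) (by linarith [hx.1])
  have hcos : 0 ≤ 1 + cos x := by linarith [neg_one_le_cos x]
  nlinarith [pi_pos, hx.1]

theorem eqnLhs_pi_neg : eqnLhs π < 0 := by
  simp only [eqnLhs, sin_pi, cos_pi]
  nlinarith [pi_lt_d2, pi_pos]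

theorem eqnLhs_two_pi_pos : 0 < eqnLhs (2 * π) := by
  simp only [eqnLhs, sin_two_pi, cos_two_pi]
  nlinarith [pi_pos]

theorem stmt_2 :
    ∃! θ : ℝ, θ ∈ Set.Icc π (2 * π) ∧
      θ ^ 2 + 2 * θ * Real.sin θ + 6 * (Real.cos θ - 1) = 0 :=
  strictMonoOn_eqnLhs.existsUnique_eq_of_mem_Icc (by linarith [pi_pos])
    continuous_eqnLhs.continuousOn ⟨eqnLhs_pi_neg.le, eqnLhs_two_pi_pos.le⟩
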